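/- arXiv:1506.04580 — 2 statements merged into one kernel-verified Lean document; each statement's English description precedes it below -/
import Mathlib

section
/- For any n×n real tridiagonal matrix Q (n≥3) with diagonal d_i, subdiagonal a_i, superdiagonal b_i, the trace of Q⁴ equals ∑_{i=1}^n d_i⁴ + ∑_{i=1}^{n-1} a_i b_i (4d_i² + 4 d_i d_{i+1} + 4 d_{i+1}² + 2 a_i b_i) + 4 ∑_{i=1}^{n-2} a_i b_i a_{i+1} b_{i+1}. -/
/-!
The diagonal entry `(Q⁴)ᵢᵢ` is a sum over closed walks `i → j → k → l → i` whose steps have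
length at most one, so such a walk never leaves `[i - 2, i + 2]`. Growing the matrix from
`m + 2` to `m + 3` rows therefore changes only the last three diagonal entries of `Q⁴`, and
expanding these with the three-term row sums shows that the change is exactly the increment
`d_{m+2}⁴ + a_{m+1} b_{m+1} (…) + 4 a_m b_m a_{m+1} b_{m+1}` of the right-hand side.
Induction on the size, from the directly computed sizes `0, 1, 2`, finishes the proof.
-/

open Finset

namespace Tridiagonal

variable (d a b : ℕ → ℝ)

def entry (i j : ℕ) : ℝ :=
  if i = j then d i else if i = j + 1 then a j else if j = i + 1 then b i else 0

variable {d a b} {i j : ℕ}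

lemma entry_diag (h : i = j) : entry d a b i j = d i := if_pos h

lemma entry_subdiag (h : i = j + 1) : entry d a b i j = a j := by
  rw [entry, if_neg (by omega), if_pos h]

lemma entry_superdiag (h : j = i + 1) : entry d a b i j = b i := by
  rw [entry, if_neg (by omega), if_neg (by omega), if_pos h]

lemma entry_eq_zero (h : j + 2 ≤ i ∨ i + 2 ≤ j) : entry d a b i j = 0 := by
  rw [entry, if_neg (by omega), if_neg (by omega), if_neg (by omega)]

lemma sum_range_entry_mul_of_lt (F : ℕ → ℝ) {n : ℕ} (h : i < n) :
    ∑ j ∈ range n, entry d a b i j * F j =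
      (if i = 0 then 0 else a (i - 1) * F (i - 1)) + d i * F i
        + (if i + 1 < n then b i * F (i + 1) else 0) := by
  have far {s : Finset ℕ} (hs : ∀ j ∈ s, j + 2 ≤ i ∨ i + 2 ≤ j) :
      ∑ j ∈ s, entry d a b i j * F j = 0 :=
    sum_eq_zero fun j hj => by rw [entry_eq_zero (hs j hj), zero_mul]
  have below : ∑ j ∈ range i, entry d a b i j * F j =
      if i = 0 then 0 else a (i - 1) * F (i - 1) := by
    rcases i with _ | p
    · simp
    · rw [sum_range_succ, far fun j hj => by simp at hj; omega, entry_subdiag rfl]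
      simp
  have above : ∑ j ∈ Ico (i + 1) n, entry d a b i j * F j =
      if i + 1 < n then b i * F (i + 1) else 0 := by
    split_ifs with hi
    · rw [sum_eq_sum_Ico_succ_bot hi, far fun j hj => by simp at hj; omega,
        entry_superdiag rfl, add_zero]
    · rw [Ico_eq_empty_of_le (by omega), sum_empty]
  rw [← sum_range_add_sum_Ico _ h.le, sum_eq_sum_Ico_succ_bot h, below, above, entry_diag rfl]
  ring

variable (d a b)

def fourthPowDiag (n i : ℕ) : ℝ :=
  ∑ j ∈ range n, entry d a b i j *
    ∑ k ∈ range n, entry d a b j k *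
      ∑ l ∈ range n, entry d a b k l * entry d a b l i

def traceFormula (n : ℕ) : ℝ :=
  (∑ i ∈ range n, d i ^ 4)
    + (∑ i ∈ range (n - 1),
        a i * b i * (4 * d i ^ 2 + 4 * d i * d (i + 1) + 4 * d (i + 1) ^ 2 + 2 * a i * b i))
    + 4 * ∑ i ∈ range (n - 2), a i * b i * a (i + 1) * b (i + 1)

/-- Closed walks of length four from `i` stay below `i + 3`. -/
lemma fourthPowDiag_succ {n i : ℕ} (h : i + 3 ≤ n) :
    fourthPowDiag d a b (n + 1) i = fourthPowDiag d a b n i := by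
  simp only [fourthPowDiag]
  simp (disch := omega) only [sum_range_entry_mul_of_lt, entry_diag, entry_subdiag,
    entry_superdiag, entry_eq_zero, if_pos, if_neg, Nat.add_sub_cancel, mul_zero, add_zero,
    zero_add, ite_self]

lemma sum_fourthPowDiag_add_three_sub (m : ℕ) :
    ∑ i ∈ range (m + 3), fourthPowDiag d a b (m + 3) i
        - ∑ i ∈ range (m + 2), fourthPowDiag d a b (m + 2) i =
      traceFormula d a b (m + 3) - traceFormula d a b (m + 2) := by
  have interior : ∑ i ∈ range m, fourthPowDiag d a b (m + 3) i =
      ∑ i ∈ range m, fourthPowDiag d a b (m + 2) i :=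
    sum_congr rfl fun i hi => fourthPowDiag_succ d a b (by simp at hi; omega)
  simp only [traceFormula, Nat.add_sub_cancel, Nat.reduceSubDiff, sum_range_succ, interior]
  simp only [fourthPowDiag]
  simp (disch := omega) only [sum_range_entry_mul_of_lt, entry_diag, entry_subdiag,
    entry_superdiag, entry_eq_zero, if_pos, if_neg, Nat.add_sub_cancel, Nat.reduceSubDiff,
    mul_zero, add_zero, zero_add, ite_self]
  ring

theorem sum_fourthPowDiag_eq_traceFormula :
    ∀ n, ∑ i ∈ range n, fourthPowDiag d a b n i = traceFormula d a b n
  | 0 | 1 | 2 => by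
    simp (disch := omega) only [fourthPowDiag, traceFormula, sum_range_succ, sum_range_zero,
      entry_diag, entry_subdiag, entry_superdiag, Nat.reduceSub, Nat.reduceAdd]
    ring
  | m + 3 => by
    linarith [sum_fourthPowDiag_add_three_sub d a b m, sum_fourthPowDiag_eq_traceFormula (m + 2)]

theorem trace_pow_four_eq_sum_fourthPowDiag {n : ℕ} {Q : Matrix (Fin n) (Fin n) ℝ}
    (hQ : ∀ i j : Fin n, Q i j = entry d a b i j) :
    Matrix.trace (Q ^ 4) = ∑ i ∈ range n, fourthPowDiag d a b n i := by
  simp only [Matrix.trace, pow_succ' _ 3, pow_three, Matrix.diag_apply, Matrix.mul_apply, hQ,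
    fourthPowDiag, ← Fin.sum_univ_eq_sum_range]

end Tridiagonal

theorem trace_fourth_power_tridiagonal_general (n : ℕ) (d a b : ℕ → ℝ)
    (Q : Matrix (Fin n) (Fin n) ℝ)
    (hQ : ∀ i j : Fin n, Q i j =
      if (i : ℕ) = (j : ℕ) then d i
      else if (i : ℕ) = (j : ℕ) + 1 then a j
      else if (j : ℕ) = (i : ℕ) + 1 then b i
      else 0) :
    Matrix.trace (Q ^ 4) =
      (∑ i ∈ Finset.range n, (d i) ^ 4)
      + (∑ i ∈ Finset.range (n - 1),
          a i * b i * (4 * (d i) ^ 2 + 4 * d i * d (i + 1) + 4 * (d (i + 1)) ^ 2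
            + 2 * a i * b i))
      + 4 * ∑ i ∈ Finset.range (n - 2), a i * b i * a (i + 1) * b (i + 1) := by
  rw [Tridiagonal.trace_pow_four_eq_sum_fourthPowDiag d a b hQ,
    Tridiagonal.sum_fourthPowDiag_eq_traceFormula, Tridiagonal.traceFormula]

/-- Trace of the fourth power of an `n × n` tridiagonal matrix (0-indexed:
`d i` is the `i`-th diagonal entry, `a i` the subdiagonal entry `Q (i+1) i`,
`b i` the superdiagonal entry `Q i (i+1)`). -/
theorem trace_fourth_power_tridiagonal (n : ℕ) (hn : 3 ≤ n) (d a b : ℕ → ℝ)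
    (Q : Matrix (Fin n) (Fin n) ℝ)
    (hQ : ∀ i j : Fin n, Q i j =
      if (i : ℕ) = (j : ℕ) then d i
      else if (i : ℕ) = (j : ℕ) + 1 then a j
      else if (j : ℕ) = (i : ℕ) + 1 then b i
      else 0) :
    Matrix.trace (Q ^ 4) =
      (∑ i ∈ Finset.range n, (d i) ^ 4)
      + (∑ i ∈ Finset.range (n - 1),
          a i * b i * (4 * (d i) ^ 2 + 4 * d i * d (i + 1) + 4 * (d (i + 1)) ^ 2
            + 2 * a i * b i))
      + 4 * ∑ i ∈ Finset.range (n - 2), a i * b i * a (i + 1) * b (i + 1) :=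
  trace_fourth_power_tridiagonal_general n d a b Q hQ
end

section
/- Let k₁, k₂ be even positive integers. Then the sum over pairs (γ₁, γ₂) of loopless circuits of lengths k₁ and k₂ on ℤ that overlap in at least one edge (with γ₂ having leftmost vertex 0 and γ₁ having leftmost vertex any integer), of ∑_i I_i(γ₁) I_i(γ₂), where I_i(γ) is the number of traversals of the edge {i, i+1} by γ, equals k₁ k₂ C(k₁, k₁/2) C(k₂, k₂/2). -/
open Finset

noncomputable section

/-- Partial sum of the first `j` steps of a `±1`-step sequence
(`true` = up-step `+1`, `false` = down-step `-1`). -/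
def stepPSum {k : ℕ} (s : Fin k → Bool) (j : ℕ) : ℤ :=
  ∑ t ∈ Finset.univ.filter (fun t : Fin k => (t : ℕ) < j),
    (if s t then (1 : ℤ) else -1)

/-- The minimum of the partial sums of a step sequence. -/
def stepMin {k : ℕ} (s : Fin k → Bool) : ℤ :=
  ((Finset.range (k + 1)).image (stepPSum s)).min'
    ((Finset.nonempty_range_iff.mpr k.succ_ne_zero).image _)

/-- The `j`-th vertex of the circuit with step sequence `s` placed so that
its leftmost vertex is `v`. -/
def circVert {k : ℕ} (v : ℤ) (s : Fin k → Bool) (j : ℕ) : ℤ :=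
  v + stepPSum s j - stepMin s

/-- `I_i(γ)`: the number of traversals of the edge `{i, i+1}` by the circuit
with step sequence `s` and leftmost vertex `v`. -/
def edgeCount {k : ℕ} (v : ℤ) (s : Fin k → Bool) (i : ℤ) : ℕ :=
  ((Finset.range k).filter
    (fun j => min (circVert v s j) (circVert v s (j + 1)) = i)).card

/-!
For any two step sequences, closed or not, the `j₁`-th step of `γ₁` and the `j₂`-th step of `γ₂`
traverse a common edge for exactly one translate `v`, namely the one matching the lower endpoints
of the two steps, so each pair of circuits contributes `k₁ k₂` (both circuits lie in `[0, k]` when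
placed at `0`, so the window `[-(k₁ + k₂), k₁ + k₂]` contains all relevant translates and edges).
It remains to count circuits: a `±1` sequence of length `k` returns to its start iff it has
`k / 2` up-steps, which gives `C(k, k/2)` of them.
-/

lemma abs_stepPSum_sub_le {k : ℕ} (s : Fin k → Bool) (a b : ℕ) :
    |stepPSum s a - stepPSum s b| ≤ k := by
  wlog hba : b ≤ a generalizing a b
  · rw [abs_sub_comm]; exact this b a (by omega)
  set A := univ.filter fun t : Fin k => (t : ℕ) < a
  set B := univ.filter fun t : Fin k => (t : ℕ) < b
  have hBA : B ⊆ A := monotone_filter_right _ fun t _ (ht : (t : ℕ) < b) => by omega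
  rw [stepPSum, stepPSum, ← sum_sdiff hBA, add_sub_cancel_right]
  calc |∑ t ∈ A \ B, if s t then (1 : ℤ) else -1|
      ≤ ∑ t ∈ A \ B, |if s t then (1 : ℤ) else -1| := abs_sum_le_sum_abs _ _
    _ = #(A \ B) := by simp [apply_ite]
    _ ≤ k := by exact_mod_cast (card_le_univ _).trans_eq (Fintype.card_fin k)

lemma stepMin_le_stepPSum {k : ℕ} (s : Fin k → Bool) {j : ℕ} (hj : j ≤ k) :
    stepMin s ≤ stepPSum s j :=
  min'_le _ _ (mem_image_of_mem _ (mem_range.mpr (Nat.lt_succ_of_le hj)))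

lemma circVert_zero_mem_Icc {k : ℕ} (s : Fin k → Bool) {j : ℕ} (hj : j ≤ k) :
    circVert 0 s j ∈ Icc 0 (k : ℤ) := by
  obtain ⟨m, -, hm⟩ := mem_image.mp (min'_mem _ _ : stepMin s ∈ _)
  have hm : stepPSum s m = stepMin s := hm
  have := stepMin_le_stepPSum s hj
  have := (abs_le.mp (abs_stepPSum_sub_le s j m)).2
  simp only [circVert, mem_Icc]
  constructor <;> linarith

def lowerEnd {k : ℕ} (s : Fin k → Bool) (j : ℕ) : ℤ :=
  min (circVert 0 s j) (circVert 0 s (j + 1))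

lemma lowerEnd_mem_Icc {k : ℕ} (s : Fin k → Bool) {j : ℕ} (hj : j < k) :
    lowerEnd s j ∈ Icc 0 (k : ℤ) := by
  have h₀ := mem_Icc.mp (circVert_zero_mem_Icc s hj.le)
  have h₁ := mem_Icc.mp (circVert_zero_mem_Icc s hj)
  exact mem_Icc.mpr ⟨le_min h₀.1 h₁.1, (min_le_left _ _).trans h₀.2⟩

lemma edgeCount_eq_card {k : ℕ} (v : ℤ) (s : Fin k → Bool) (i : ℤ) :
    edgeCount v s i = #{j ∈ range k | v + lowerEnd s j = i} := by
  simp only [edgeCount, lowerEnd, circVert, zero_add, add_sub_assoc, min_add_add_left]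

lemma sum_sum_card_mul_card {ι κ : Type*} (J₁ : Finset ι) (J₂ : Finset κ) (a : ι → ℤ)
    (b : κ → ℤ) (V W : Finset ℤ) (hb : ∀ j ∈ J₂, b j ∈ W)
    (hab : ∀ j₁ ∈ J₁, ∀ j₂ ∈ J₂, b j₂ - a j₁ ∈ V) :
    ∑ v ∈ V, ∑ i ∈ W, #{j ∈ J₁ | v + a j = i} * #{j ∈ J₂ | b j = i} = #J₁ * #J₂ := by
  have hmeet : ∀ j₁ ∈ J₁, ∀ j₂ ∈ J₂,
      ∑ v ∈ V, ∑ i ∈ W, (if v + a j₁ = i then 1 else 0) * (if b j₂ = i then 1 else 0) = 1 := by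
    intro j₁ hj₁ j₂ hj₂
    have hv : ∀ v, v + a j₁ = b j₂ ↔ b j₂ - a j₁ = v := fun v => by omega
    simp only [mul_ite, mul_one, mul_zero, sum_ite_eq, hb j₂ hj₂, if_true, hv, hab j₁ hj₁ j₂ hj₂]
  simp only [card_filter, sum_mul_sum]
  simp_rw [sum_comm (s := W) (t := J₁), sum_comm (s := W) (t := J₂), sum_comm (s := V) (t := J₁),
    sum_comm (s := V) (t := J₂)]
  rw [sum_congr rfl fun j₁ h₁ => sum_congr rfl fun j₂ h₂ => hmeet j₁ h₁ j₂ h₂]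
  simp

lemma stepPSum_self {k : ℕ} (s : Fin k → Bool) :
    stepPSum s k = 2 * #{t | s t} - k := by
  have hsign : ∀ t, (if s t then (1 : ℤ) else -1) = 2 * (if s t then 1 else 0) - 1 := by
    intro t; cases s t <;> rfl
  simp only [stepPSum, Fin.is_lt, filter_true, hsign, sum_sub_distrib, ← mul_sum, sum_boole,
    sum_const, card_univ, Fintype.card_fin, nsmul_one]

lemma card_filter_stepPSum_self_eq_zero {k : ℕ} (he : Even k) :
    #{s : Fin k → Bool | stepPSum s k = 0} = k.choose (k / 2) := by
  obtain ⟨m, rfl⟩ := he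
  have hbal : ∀ s : Fin (m + m) → Bool, stepPSum s (m + m) = 0 ↔ #{t | s t} = (m + m) / 2 := by
    intro s; rw [stepPSum_self]; omega
  rw [filter_congr fun s _ => hbal s, ← card_fin (m + m), ← card_powersetCard, card_fin]
  refine card_bij' (fun s _ => ({t | s t} : Finset _)) (fun A _ t => decide (t ∈ A)) ?_ ?_ ?_ ?_
  · intro s hs; simpa [mem_powersetCard] using hs
  · intro A hA; simpa [mem_powersetCard] using hA
  · intro s _; funext t; simp
  · intro A _; ext t; simp

lemma sum_sum_edgeCount_mul_edgeCount {k₁ k₂ : ℕ} (s₁ : Fin k₁ → Bool) (s₂ : Fin k₂ → Bool) :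
    ∑ v ∈ Icc (-(k₁ + k₂ : ℤ)) (k₁ + k₂), ∑ i ∈ Icc (-(k₁ + k₂ : ℤ)) (k₁ + k₂),
      edgeCount v s₁ i * edgeCount 0 s₂ i = k₁ * k₂ := by
  have hb : ∀ j ∈ range k₂, lowerEnd s₂ j ∈ Icc (-(k₁ + k₂ : ℤ)) (k₁ + k₂) := by
    intro j hj
    have := mem_Icc.mp (lowerEnd_mem_Icc s₂ (mem_range.mp hj))
    exact mem_Icc.mpr ⟨by omega, by omega⟩
  have hab : ∀ j₁ ∈ range k₁, ∀ j₂ ∈ range k₂,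
      lowerEnd s₂ j₂ - lowerEnd s₁ j₁ ∈ Icc (-(k₁ + k₂ : ℤ)) (k₁ + k₂) := by
    intro j₁ hj₁ j₂ hj₂
    have := mem_Icc.mp (lowerEnd_mem_Icc s₁ (mem_range.mp hj₁))
    have := mem_Icc.mp (lowerEnd_mem_Icc s₂ (mem_range.mp hj₂))
    exact mem_Icc.mpr ⟨by omega, by omega⟩
  simpa [edgeCount_eq_card] using sum_sum_card_mul_card _ _ _ _ _ _ hb hab

theorem sum_edge_overlaps_eq_general (k₁ k₂ : ℕ) (he₁ : Even k₁) (he₂ : Even k₂) :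
    ∑ v ∈ Finset.Icc (-(k₁ + k₂ : ℤ)) (k₁ + k₂),
      ∑ s₁ ∈ Finset.univ.filter (fun s : Fin k₁ → Bool => stepPSum s k₁ = 0),
        ∑ s₂ ∈ Finset.univ.filter (fun s : Fin k₂ → Bool => stepPSum s k₂ = 0),
          ∑ i ∈ Finset.Icc (-(k₁ + k₂ : ℤ)) (k₁ + k₂),
            edgeCount v s₁ i * edgeCount 0 s₂ i =
      k₁ * k₂ * Nat.choose k₁ (k₁ / 2) * Nat.choose k₂ (k₂ / 2) := by
  rw [sum_comm]
  simp_rw [sum_comm (s := Icc (-(k₁ + k₂ : ℤ)) (k₁ + k₂))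
      (t := {s : Fin k₂ → Bool | stepPSum s k₂ = 0}),
    sum_sum_edgeCount_mul_edgeCount, sum_const, card_filter_stepPSum_self_eq_zero he₁,
    card_filter_stepPSum_self_eq_zero he₂, smul_eq_mul]
  ring

/-- For even `k₁, k₂`, the sum over all pairs of loopless circuits
`(γ₁, γ₂)` of lengths `k₁, k₂` (with `γ₂` having leftmost vertex `0` and `γ₁`
placed at any leftmost vertex `v`) of `∑_i I_i(γ₁) I_i(γ₂)` equals
`k₁ k₂ C(k₁, k₁/2) C(k₂, k₂/2)`. (Only overlapping placements and edges
contribute, so the finite ranges below capture the full sum.) -/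
theorem sum_edge_overlaps_eq (k₁ k₂ : ℕ) (h₁ : 0 < k₁) (he₁ : Even k₁)
    (h₂ : 0 < k₂) (he₂ : Even k₂) :
    ∑ v ∈ Finset.Icc (-(k₁ + k₂ : ℤ)) (k₁ + k₂),
      ∑ s₁ ∈ Finset.univ.filter (fun s : Fin k₁ → Bool => stepPSum s k₁ = 0),
        ∑ s₂ ∈ Finset.univ.filter (fun s : Fin k₂ → Bool => stepPSum s k₂ = 0),
          ∑ i ∈ Finset.Icc (-(k₁ + k₂ : ℤ)) (k₁ + k₂),
            edgeCount v s₁ i * edgeCount 0 s₂ i =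
      k₁ * k₂ * Nat.choose k₁ (k₁ / 2) * Nat.choose k₂ (k₂ / 2) :=
  sum_edge_overlaps_eq_general k₁ k₂ he₁ he₂

end
end
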